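/- Let q ≥ 1. For every θ in the frontier of the invertible region D_θ, the point ζ = B⁻(θ) lies in the closed unit cube [−1,1]^q and has at least one coordinate of absolute value exactly 1; i.e., |ζ_i| = 1 for some i ∈ {1,…,q}. -/

import Mathlib

/-- Forward recursion for the Barndorff-Nielsen–Schou / Monahan transformation:
`fwdRow ζ k i = θ_{i,k}` (1-based), with `θ_{k,k} = ζ_k` and
`θ_{i,k} = θ_{i,k-1} - ζ_k * θ_{k-i,k-1}` for `1 ≤ i ≤ k-1`. -/
noncomputable def fwdRow (ζ : ℕ → ℝ) : ℕ → ℕ → ℝ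
  | 0 => fun _ => 0
  | (k+1) => fun i =>
      if i = k + 1 then ζ (k + 1)
      else fwdRow ζ k i - ζ (k + 1) * fwdRow ζ k (k + 1 - i)

open Classical in
/-- Reverse recursion: `(invAux q θ d).1` is row `q - d` (i.e. `θ_{·, q-d}`), and
`(invAux q θ d).2` is the proposition that `|θ_{j,j}| < 1` for all `j` with `q - d ≤ j ≤ q`.
Row `q-(d+1)` is given by `θ_{i,k-1} = (θ_{i,k} + θ_{k,k} θ_{k-i,k})/(1-θ_{k,k}^2)` with
`k = q - d` when the diagonal condition holds at all levels `≥ k`, and is `0` otherwise. -/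
noncomputable def invAux (q : ℕ) (θ : ℕ → ℝ) : ℕ → (ℕ → ℝ) × Prop
  | 0 => (θ, |θ q| < 1)
  | (d+1) =>
      let p := invAux q θ d
      let row : ℕ → ℝ := fun i =>
        if p.2 then (p.1 i + p.1 (q - d) * p.1 (q - d - i)) / (1 - (p.1 (q - d)) ^ 2)
        else 0
      (row, p.2 ∧ |row (q - d - 1)| < 1)

/-- Interpret a vector in `ℝ^q` as a 1-based sequence `ℕ → ℝ` (value `0` out of range). -/
def toSeq {q : ℕ} (v : Fin q → ℝ) : ℕ → ℝ :=
  fun n => if h : n - 1 < q then v ⟨n - 1, h⟩ else 0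

/-- The map `B : ℝ^q → ℝ^q`, `B(ζ)_i = θ_{i,q}`. -/
noncomputable def Bmap {q : ℕ} (ζ : Fin q → ℝ) : Fin q → ℝ :=
  fun i => fwdRow (toSeq ζ) q (i.1 + 1)

/-- The map `B⁻ : ℝ^q → ℝ^q`, `B⁻(θ)_i = θ_{i,i}` computed by the reverse recursion. -/
noncomputable def Binv {q : ℕ} (θ : Fin q → ℝ) : Fin q → ℝ :=
  fun i => (invAux q (toSeq θ) (q - (i.1 + 1))).1 (i.1 + 1)

/-- The invertible region `D_θ ⊆ ℝ^q`: all complex roots of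
`θ(z) = 1 - θ_1 z - ⋯ - θ_q z^q` satisfy `|z| > 1`. -/
def invRegion (q : ℕ) : Set (Fin q → ℝ) :=
  {θ | ∀ z : ℂ, 1 - ∑ i : Fin q, (θ i : ℂ) * z ^ (i.1 + 1) = 0 → 1 < ‖z‖}

/-- The open unit cube `D_ζ = (-1,1)^q ⊆ ℝ^q`. -/
def openCube (q : ℕ) : Set (Fin q → ℝ) :=
  {ζ | ∀ i, ζ i ∈ Set.Ioo (-1 : ℝ) 1}

/-! The reverse recursion is the Schur–Cohn reduction. If `|c| < 1`, where `c = θ_{k,k}`, then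
`1 - θ_{1,k} z - ⋯ - θ_{k,k} z^k` has no zero in the closed unit disk iff the reduced polynomial of
degree `k - 1` has none: on that disk the reciprocal polynomial `z^k θ(1/z)` is dominated in modulus
by `θ(z)` itself (compare the Blaschke factors of the two), and the two polynomials are related by
`(1 - c²) θ_{k-1}(z) = θ_k(z) + c z^k θ_k(1/z)`. Hence `D_θ` is exactly the set where every pivot
`θ_{k,k}` of `B⁻` has modulus `< 1`. Each pivot depends continuously on `θ` as long as the earlier
ones have modulus `< 1`, so `D_θ` is open, and at a frontier point the first pivot of modulus `≥ 1`
is a limit of pivots of modulus `< 1`. It therefore has modulus exactly `1`; the earlier pivots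
have modulus `< 1` and the later ones are set to `0`. -/

open Finset Polynomial Filter Topology ComplexConjugate

section SchurCohn

def maCoeff (a : ℕ → ℝ) (i : ℕ) : ℝ := if i = 0 then 1 else -a i

noncomputable def maPoly (a : ℕ → ℝ) (k : ℕ) (z : ℂ) : ℂ :=
  ∑ i ∈ range (k + 1), (maCoeff a i : ℂ) * z ^ i

noncomputable def maPolyRev (a : ℕ → ℝ) (k : ℕ) (z : ℂ) : ℂ :=
  ∑ i ∈ range (k + 1), (maCoeff a (k - i) : ℂ) * z ^ i

def NoRootInClosedDisk (a : ℕ → ℝ) (k : ℕ) : Prop :=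
  ∀ z : ℂ, ‖z‖ ≤ 1 → maPoly a k z ≠ 0

noncomputable def maPolynomial (a : ℕ → ℝ) (k : ℕ) : ℂ[X] :=
  ∑ i ∈ range (k + 1), C (maCoeff a i : ℂ) * X ^ i

variable {a b : ℕ → ℝ} {k j : ℕ}

@[simp] lemma maCoeff_zero (a : ℕ → ℝ) : maCoeff a 0 = 1 := rfl

lemma maCoeff_of_ne_zero {i : ℕ} (hi : i ≠ 0) : maCoeff a i = -a i := if_neg hi

lemma eval_maPolynomial (z : ℂ) : (maPolynomial a k).eval z = maPoly a k z := by
  simp [maPolynomial, maPoly, eval_finsetSum]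

lemma natDegree_maPolynomial_le : (maPolynomial a k).natDegree ≤ k :=
  natDegree_sum_le_of_forall_le _ _ fun _ hi =>
    (natDegree_C_mul_X_pow_le _ _).trans (Nat.lt_succ_iff.mp (mem_range.mp hi))

lemma coeff_maPolynomial_self : (maPolynomial a k).coeff k = maCoeff a k := by
  simp [maPolynomial]

lemma maPoly_apply_zero : maPoly a k 0 = 1 := by simp [maPoly, sum_range_succ']

lemma maPolyRev_apply_zero : maPolyRev a k 0 = maCoeff a k := by
  simp [maPolyRev, sum_range_succ']

lemma maPoly_conj (z : ℂ) : maPoly a k (conj z) = conj (maPoly a k z) := by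
  simp [maPoly, map_sum]

lemma maPolyRev_eq_pow_mul_maPoly_inv {z : ℂ} (hz : z ≠ 0) :
    maPolyRev a k z = z ^ k * maPoly a k z⁻¹ := by
  rw [maPolyRev, ← sum_range_reflect, maPoly, mul_sum]
  refine sum_congr rfl fun i hi => ?_
  have hi : i ≤ k := Nat.lt_succ_iff.mp (mem_range.mp hi)
  rw [Nat.add_sub_cancel, Nat.sub_sub_self hi, pow_sub₀ _ hz hi, inv_pow]
  ring

lemma norm_one_sub_mul_le_norm_conj_sub {z r : ℂ} (hz : ‖z‖ ≤ 1) (hr : 1 ≤ ‖r‖) :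
    ‖1 - z * r‖ ≤ ‖conj z - r‖ := by
  have hz2 : Complex.normSq z ≤ 1 := by
    rw [← Complex.sq_norm]; nlinarith [norm_nonneg z]
  have hr2 : 1 ≤ Complex.normSq r := by
    rw [← Complex.sq_norm]; nlinarith
  have key : Complex.normSq (conj z - r) - Complex.normSq (1 - z * r) =
      (1 - Complex.normSq z) * (Complex.normSq r - 1) := by
    simp only [Complex.normSq_apply, Complex.sub_re, Complex.sub_im, Complex.mul_re,
      Complex.mul_im, Complex.one_re, Complex.one_im, Complex.conj_re, Complex.conj_im]
    ring
  rw [← sq_le_sq₀ (norm_nonneg _) (norm_nonneg _), Complex.sq_norm, Complex.sq_norm]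
  nlinarith

lemma norm_multiset_prod_map {𝕜 ι : Type*} [NormedField 𝕜] (s : Multiset ι) (f : ι → 𝕜) :
    ‖(s.map f).prod‖ = (s.map fun i => ‖f i‖).prod := by
  simpa [Multiset.map_map] using map_multiset_prod (normHom (α := 𝕜)) (s.map f)

lemma maPoly_eq_leadingCoeff_mul_prod_roots (z : ℂ) :
    maPoly a k z = (maPolynomial a k).leadingCoeff *
      ((maPolynomial a k).roots.map fun r => z - r).prod := by
  rw [← eval_maPolynomial, (IsAlgClosed.splits _).eval_eq_prod_roots]

lemma norm_leadingCoeff_mul_prod_norm_roots :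
    ‖(maPolynomial a k).leadingCoeff‖ * ((maPolynomial a k).roots.map fun r => ‖r‖).prod = 1 := by
  have h := congrArg norm (maPoly_eq_leadingCoeff_mul_prod_roots (a := a) (k := k) 0)
  rw [maPoly_apply_zero, norm_one, norm_mul, norm_multiset_prod_map] at h
  simpa using h.symm

namespace NoRootInClosedDisk

lemma one_lt_norm_of_mem_roots (h : NoRootInClosedDisk a k) {r : ℂ}
    (hr : r ∈ (maPolynomial a k).roots) : 1 < ‖r‖ := by
  by_contra! hle
  exact h r hle (by rw [← eval_maPolynomial]; exact isRoot_of_mem_roots hr)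

lemma abs_lt_one (h : NoRootInClosedDisk a k) (hk : 1 ≤ k) : |a k| < 1 := by
  set P := maPolynomial a k
  have hcoeff : P.coeff k = -(a k : ℂ) := by
    rw [coeff_maPolynomial_self, maCoeff_of_ne_zero (by omega), Complex.ofReal_neg]
  by_cases hdeg : P.natDegree = k
  · have hroots : P.roots ≠ 0 := by
      rw [← Multiset.card_pos, IsAlgClosed.card_roots_eq_natDegree]; omega
    have hprod : 1 < (P.roots.map fun r => ‖r‖).prod := by
      simpa using Multiset.prod_map_lt_prod_map hroots (fun _ => (1 : ℝ)) (‖·‖)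
        (fun _ _ => one_pos) fun r hr => h.one_lt_norm_of_mem_roots hr
    have hlc : ‖P.leadingCoeff‖ = |a k| := by
      rw [leadingCoeff, hdeg, hcoeff, norm_neg, Complex.norm_real, Real.norm_eq_abs]
    nlinarith [norm_leadingCoeff_mul_prod_norm_roots (a := a) (k := k), abs_nonneg (a k)]
  · have hzero : P.coeff k = 0 :=
      coeff_eq_zero_of_natDegree_lt (natDegree_maPolynomial_le.lt_of_ne hdeg)
    rw [hcoeff, neg_eq_zero, Complex.ofReal_eq_zero] at hzero
    simp [hzero]

lemma abs_maCoeff_le_one (h : NoRootInClosedDisk a k) : |maCoeff a k| ≤ 1 := by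
  rcases Nat.eq_zero_or_pos k with rfl | hk
  · simp
  · rw [maCoeff_of_ne_zero hk.ne', abs_neg]; exact (h.abs_lt_one hk).le

lemma norm_maPolyRev_le (h : NoRootInClosedDisk a k) {z : ℂ} (hz : ‖z‖ ≤ 1) :
    ‖maPolyRev a k z‖ ≤ ‖maPoly a k z‖ := by
  rcases eq_or_ne z 0 with rfl | hz0
  · simpa [maPolyRev_apply_zero, maPoly_apply_zero] using h.abs_maCoeff_le_one
  set P := maPolynomial a k
  have hm : P.roots.card ≤ k := (card_roots' P).trans natDegree_maPolynomial_le
  have hrev : maPolyRev a k z = P.leadingCoeff * z ^ (k - P.roots.card) *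
      (P.roots.map fun r => 1 - z * r).prod := by
    have hprod : (P.roots.map fun r => 1 - z * r).prod =
        z ^ P.roots.card * (P.roots.map fun r => z⁻¹ - r).prod := by
      rw [← Multiset.prod_replicate, ← Multiset.map_const', ← Multiset.prod_map_mul]
      congr 1
      refine Multiset.map_congr rfl fun r _ => ?_
      field_simp
    rw [maPolyRev_eq_pow_mul_maPoly_inv hz0, maPoly_eq_leadingCoeff_mul_prod_roots, hprod,
      ← pow_sub_mul_pow z hm]
    ring
  have hfactor : ∀ r ∈ P.roots, ‖1 - z * r‖ ≤ ‖conj z - r‖ := fun r hr =>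
    norm_one_sub_mul_le_norm_conj_sub hz (h.one_lt_norm_of_mem_roots hr).le
  calc ‖maPolyRev a k z‖
      = ‖P.leadingCoeff‖ * ‖z‖ ^ (k - P.roots.card) *
          (P.roots.map fun r => ‖1 - z * r‖).prod := by
        rw [hrev, norm_mul, norm_mul, norm_pow, norm_multiset_prod_map]
    _ ≤ ‖P.leadingCoeff‖ * 1 * (P.roots.map fun r => ‖conj z - r‖).prod := by
        gcongr
        · exact Multiset.prod_map_nonneg fun _ _ => norm_nonneg _
        · exact pow_le_one₀ (norm_nonneg z) hz
        · exact Multiset.prod_map_le_prod_map₀ _ _ (fun _ _ => norm_nonneg _) hfactor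
    _ = ‖maPoly a k z‖ := by
        rw [mul_one, ← norm_multiset_prod_map, ← norm_mul, ← maPoly_eq_leadingCoeff_mul_prod_roots,
          maPoly_conj, Complex.norm_conj]

end NoRootInClosedDisk

lemma one_sub_sq_mul_maPoly_eq (hak : |a (j + 1)| < 1)
    (hb : ∀ i, 1 ≤ i → i ≤ j → b i = (a i + a (j + 1) * a (j + 1 - i)) / (1 - a (j + 1) ^ 2))
    (z : ℂ) :
    ((1 - a (j + 1) ^ 2 : ℝ) : ℂ) * maPoly b j z =
      maPoly a (j + 1) z + a (j + 1) * maPolyRev a (j + 1) z := by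
  have hden : 1 - a (j + 1) ^ 2 ≠ 0 := by nlinarith [abs_lt.mp hak]
  have hcoeff : ∀ i ≤ j, (1 - a (j + 1) ^ 2) * maCoeff b i =
      maCoeff a i + a (j + 1) * maCoeff a (j + 1 - i) := by
    intro i hi
    rcases Nat.eq_zero_or_pos i with rfl | hi0
    · simp [maCoeff_of_ne_zero j.add_one_ne_zero]; ring
    · rw [maCoeff_of_ne_zero hi0.ne', maCoeff_of_ne_zero hi0.ne', maCoeff_of_ne_zero (by omega),
        hb i hi0 hi]
      field_simp
      ring
  rw [maPoly, maPoly, maPolyRev, mul_sum, mul_sum, ← sum_add_distrib, sum_range_succ _ (j + 1),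
    Nat.sub_self, maCoeff_zero, maCoeff_of_ne_zero j.add_one_ne_zero, Complex.ofReal_neg,
    Complex.ofReal_one, neg_mul, one_mul, neg_add_cancel, add_zero]
  refine sum_congr rfl fun i hi => ?_
  have := congrArg (fun x : ℝ => (x : ℂ) * z ^ i) (hcoeff i (Nat.lt_succ_iff.mp (mem_range.mp hi)))
  push_cast at this ⊢
  linear_combination this

lemma maPoly_succ_eq (ha : ∀ i, 1 ≤ i → i ≤ j → a i = b i - a (j + 1) * b (j + 1 - i)) (z : ℂ) :
    maPoly a (j + 1) z = maPoly b j z - a (j + 1) * (z * maPolyRev b j z) := by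
  have hmid : ∀ i ∈ range j, (maCoeff a (i + 1) : ℂ) * z ^ (i + 1) =
      maCoeff b (i + 1) * z ^ (i + 1) - a (j + 1) * (z * (maCoeff b (j - i) * z ^ i)) := by
    intro i hi
    have hi := mem_range.mp hi
    rw [maCoeff_of_ne_zero i.add_one_ne_zero, maCoeff_of_ne_zero i.add_one_ne_zero,
      maCoeff_of_ne_zero (by omega), ha (i + 1) (by omega) (by omega), Nat.add_sub_add_right]
    push_cast
    ring
  rw [maPoly, maPoly, maPolyRev, mul_sum, sum_range_succ', sum_range_succ, sum_range_succ',
    sum_range_succ _ j, sum_congr rfl hmid, sum_sub_distrib, ← mul_sum, Nat.sub_self,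
    maCoeff_of_ne_zero j.add_one_ne_zero, maCoeff_zero, maCoeff_zero]
  push_cast
  ring

lemma add_mul_ne_zero_of_norm_le {𝕜 : Type*} [NormedDivisionRing 𝕜] {f g c : 𝕜} (hf : f ≠ 0)
    (hg : ‖g‖ ≤ ‖f‖) (hc : ‖c‖ < 1) : f + c * g ≠ 0 := by
  intro h
  have hfg : ‖f‖ ≤ ‖c‖ * ‖f‖ :=
    calc ‖f‖ = ‖c‖ * ‖g‖ := by rw [eq_neg_of_add_eq_zero_left h, norm_neg, norm_mul]
      _ ≤ ‖c‖ * ‖f‖ := mul_le_mul_of_nonneg_left hg (norm_nonneg c)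
  nlinarith [norm_pos_iff.mpr hf]

theorem noRootInClosedDisk_succ_iff (hak : |a (j + 1)| < 1)
    (hb : ∀ i, 1 ≤ i → i ≤ j → b i = (a i + a (j + 1) * a (j + 1 - i)) / (1 - a (j + 1) ^ 2)) :
    NoRootInClosedDisk a (j + 1) ↔ NoRootInClosedDisk b j := by
  have hc : ‖(a (j + 1) : ℂ)‖ < 1 := by rwa [Complex.norm_real, Real.norm_eq_abs]
  constructor
  · intro h z hz hzero
    have hid := one_sub_sq_mul_maPoly_eq hak hb z
    rw [hzero, mul_zero] at hid
    exact add_mul_ne_zero_of_norm_le (h z hz) (h.norm_maPolyRev_le hz) hc hid.symm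
  · intro h z hz
    have ha : ∀ i, 1 ≤ i → i ≤ j → a i = b i - a (j + 1) * b (j + 1 - i) := by
      intro i hi1 hij
      have hden : 1 - a (j + 1) ^ 2 ≠ 0 := by nlinarith [abs_lt.mp hak]
      rw [hb i hi1 hij, hb (j + 1 - i) (by omega) (by omega), Nat.sub_sub_self (by omega)]
      field_simp
      ring
    rw [maPoly_succ_eq ha, sub_eq_add_neg, ← neg_mul]
    refine add_mul_ne_zero_of_norm_le (h z hz) ?_ (by rwa [norm_neg])
    rw [norm_mul, ← one_mul ‖maPoly b j z‖]
    exact mul_le_mul hz (h.norm_maPolyRev_le hz) (norm_nonneg _) zero_le_one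

end SchurCohn

section Recursion

variable (q : ℕ) (σ : ℕ → ℝ)

/-- The pivot `θ_{q-d,q-d}` produced at step `d` of the reverse recursion. -/
noncomputable def invAuxDiag (d : ℕ) : ℝ := (invAux q σ d).1 (q - d)

lemma invAux_snd_iff (d : ℕ) : (invAux q σ d).2 ↔ ∀ e < d + 1, |invAuxDiag q σ e| < 1 := by
  induction d with
  | zero => simp [invAuxDiag, invAux]
  | succ d ih =>
    rw [Nat.forall_lt_succ_right, ← ih, invAuxDiag, Nat.sub_add_eq]
    rfl

variable {q σ}

lemma invAux_succ_fst_of_forall {d : ℕ} (h : ∀ e < d + 1, |invAuxDiag q σ e| < 1) (i : ℕ) :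
    (invAux q σ (d + 1)).1 i =
      ((invAux q σ d).1 i + invAuxDiag q σ d * (invAux q σ d).1 (q - d - i)) /
        (1 - invAuxDiag q σ d ^ 2) :=
  if_pos ((invAux_snd_iff q σ d).2 h)

lemma invAuxDiag_eq_zero_of_lt {D d : ℕ} (hD : 1 ≤ |invAuxDiag q σ D|) (hd : D < d) :
    invAuxDiag q σ d = 0 := by
  obtain ⟨d, rfl⟩ := Nat.exists_eq_add_of_lt hd
  have hfail : ¬ (invAux q σ (D + d)).2 := fun h =>
    (((invAux_snd_iff q σ _).1 h) D (by omega)).not_ge hD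
  exact if_neg hfail

lemma noRootInClosedDisk_invAux_fst_iff {d : ℕ} (hd : d < q)
    (h : ∀ e < d, |invAuxDiag q σ e| < 1) :
    NoRootInClosedDisk (invAux q σ d).1 (q - d) ↔
      |invAuxDiag q σ d| < 1 ∧ NoRootInClosedDisk (invAux q σ (d + 1)).1 (q - (d + 1)) := by
  obtain ⟨j, hj⟩ : ∃ j, q - d = j + 1 := ⟨q - d - 1, by omega⟩
  have hj' : q - (d + 1) = j := by omega
  by_cases hp : |invAuxDiag q σ d| < 1
  · have hall : ∀ e < d + 1, |invAuxDiag q σ e| < 1 := Nat.forall_lt_succ_right.2 ⟨h, hp⟩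
    rw [hj, hj', and_iff_right hp]
    refine noRootInClosedDisk_succ_iff (by rwa [← hj]) fun i _ _ => ?_
    rw [invAux_succ_fst_of_forall hall, invAuxDiag, hj]
  · refine iff_of_false (fun hnr => hp ?_) fun hnr => hp hnr.1
    simpa [invAuxDiag, hj] using hnr.abs_lt_one (by omega)

theorem noRootInClosedDisk_iff_forall_abs_invAuxDiag_lt :
    NoRootInClosedDisk σ q ↔ ∀ e < q, |invAuxDiag q σ e| < 1 := by
  have key : ∀ d ≤ q, NoRootInClosedDisk σ q ↔
      (∀ e < d, |invAuxDiag q σ e| < 1) ∧ NoRootInClosedDisk (invAux q σ d).1 (q - d) := by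
    intro d
    induction d with
    | zero => simp [invAux]
    | succ d ih =>
      intro hd
      rw [ih (by omega), Nat.forall_lt_succ_right, and_assoc]
      exact and_congr_right fun h => noRootInClosedDisk_invAux_fst_iff (by omega) h
  rw [key q le_rfl, Nat.sub_self, and_iff_left]
  intro z _
  simp [maPoly]

end Recursion

theorem tendsto_invAux_fst {q : ℕ} {σ : ℕ → ℝ} {α : Type*} {l : Filter α} {τ : α → ℕ → ℝ}
    (hτ : ∀ i, Tendsto (fun x => τ x i) l (𝓝 (σ i))) (d : ℕ)
    (hd : ∀ e < d, |invAuxDiag q σ e| < 1) :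
    (∀ i, Tendsto (fun x => (invAux q (τ x) d).1 i) l (𝓝 ((invAux q σ d).1 i))) ∧
      ∀ᶠ x in l, ∀ e < d, |invAuxDiag q (τ x) e| < 1 := by
  induction d with
  | zero => exact ⟨hτ, Eventually.of_forall fun _ e he => absurd he e.not_lt_zero⟩
  | succ d ih =>
    rw [Nat.forall_lt_succ_right] at hd
    obtain ⟨hrow, hev⟩ := ih hd.1
    have hdiag : ∀ᶠ x in l, |invAuxDiag q (τ x) d| < 1 :=
      ((hrow (q - d)).abs).eventually_lt_const hd.2
    have hev' : ∀ᶠ x in l, ∀ e < d + 1, |invAuxDiag q (τ x) e| < 1 := by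
      filter_upwards [hev, hdiag] with x h1 h2 using Nat.forall_lt_succ_right.2 ⟨h1, h2⟩
    refine ⟨fun i => ?_, hev'⟩
    have hden : 1 - invAuxDiag q σ d ^ 2 ≠ 0 := by nlinarith [abs_lt.mp hd.2]
    rw [invAux_succ_fst_of_forall (Nat.forall_lt_succ_right.2 hd)]
    refine Tendsto.congr' ?_ (((hrow i).add ((hrow (q - d)).mul (hrow (q - d - i)))).div
      (tendsto_const_nhds.sub ((hrow (q - d)).pow 2)) hden)
    filter_upwards [hev'] with x hx
    rw [invAux_succ_fst_of_forall hx]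
    rfl

lemma continuous_toSeq_apply {q : ℕ} (n : ℕ) : Continuous fun v : Fin q → ℝ => toSeq v n := by
  by_cases h : n - 1 < q
  · simpa [toSeq, h] using continuous_apply _
  · simpa [toSeq, h] using continuous_const

lemma one_sub_sum_eq_maPoly {q : ℕ} (θ : Fin q → ℝ) (z : ℂ) :
    1 - ∑ i : Fin q, (θ i : ℂ) * z ^ (i.1 + 1) = maPoly (toSeq θ) q z := by
  rw [maPoly, sum_range_succ',
    ← Fin.sum_univ_eq_sum_range (fun i => (maCoeff (toSeq θ) (i + 1) : ℂ) * z ^ (i + 1))]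
  simp [maCoeff, toSeq, sub_eq_neg_add]

lemma mem_invRegion_iff {q : ℕ} (θ : Fin q → ℝ) :
    θ ∈ invRegion q ↔ ∀ e < q, |invAuxDiag q (toSeq θ) e| < 1 := by
  rw [← noRootInClosedDisk_iff_forall_abs_invAuxDiag_lt]
  simp only [invRegion, Set.mem_ofPred_eq, NoRootInClosedDisk, one_sub_sum_eq_maPoly]
  exact forall_congr' fun z => ⟨fun h hz h0 => (h h0).not_ge hz, fun h h0 => not_le.1 (h · h0)⟩

theorem isOpen_invRegion (q : ℕ) : IsOpen (invRegion q) := by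
  refine isOpen_iff_mem_nhds.2 fun θ hθ => ?_
  have hτ i := (continuous_toSeq_apply (q := q) i).tendsto θ
  filter_upwards [(tendsto_invAux_fst hτ q ((mem_invRegion_iff θ).1 hθ)).2] with θ' h
  exact (mem_invRegion_iff θ').2 h

lemma abs_invAuxDiag_le_one_of_mem_closure {q d : ℕ} {θ : Fin q → ℝ}
    (hθ : θ ∈ closure (invRegion q)) (hd : d < q) (h : ∀ e < d, |invAuxDiag q (toSeq θ) e| < 1) :
    |invAuxDiag q (toSeq θ) d| ≤ 1 := by
  have hτ i := (continuous_toSeq_apply (q := q) i).tendsto θ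
  have : (𝓝[invRegion q] θ).NeBot := mem_closure_iff_nhdsWithin_neBot.1 hθ
  have hlim : Tendsto (fun θ' => |invAuxDiag q (toSeq θ') d|) (𝓝[invRegion q] θ)
      (𝓝 |invAuxDiag q (toSeq θ) d|) :=
    (((tendsto_invAux_fst hτ d h).1 (q - d)).mono_left nhdsWithin_le_nhds).abs
  refine le_of_tendsto hlim ?_
  filter_upwards [self_mem_nhdsWithin] with θ' hθ'
  exact ((mem_invRegion_iff θ').1 hθ' d hd).le

lemma Binv_apply {q : ℕ} (θ : Fin q → ℝ) (i : Fin q) :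
    Binv θ i = invAuxDiag q (toSeq θ) (q - (i + 1)) := by
  rw [Binv, invAuxDiag, Nat.sub_sub_self i.isLt]

theorem Binv_of_frontier_general {q : ℕ} (θ : Fin q → ℝ)
    (hθ : θ ∈ frontier (invRegion q)) :
    (∀ i, |Binv θ i| ≤ 1) ∧ ∃ i, |Binv θ i| = 1 := by
  rw [(isOpen_invRegion q).frontier_eq] at hθ
  obtain ⟨d, hdq, hd⟩ : ∃ d < q, 1 ≤ |invAuxDiag q (toSeq θ) d| := by
    simpa [mem_invRegion_iff] using hθ.2
  have hex : ∃ d, 1 ≤ |invAuxDiag q (toSeq θ) d| := ⟨d, hd⟩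
  set D := Nat.find hex
  have hDq : D < q := (Nat.find_min' hex hd).trans_lt hdq
  have hbelow : ∀ e < D, |invAuxDiag q (toSeq θ) e| < 1 := fun e he =>
    not_le.1 (Nat.find_min hex he)
  have hDeq : |invAuxDiag q (toSeq θ) D| = 1 :=
    le_antisymm (abs_invAuxDiag_le_one_of_mem_closure hθ.1 hDq hbelow) (Nat.find_spec hex)
  refine ⟨fun i => ?_, ⟨q - D - 1, by omega⟩, ?_⟩
  · rw [Binv_apply]
    rcases lt_trichotomy (q - (i + 1)) D with h | h | h
    · exact (hbelow _ h).le
    · rw [h, hDeq]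
    · rw [invAuxDiag_eq_zero_of_lt (Nat.find_spec hex) h, abs_zero]
      exact zero_le_one
  · rw [Binv_apply, show q - (q - D - 1 + 1) = D by omega, hDeq]

/-- For `q ≥ 1` and `θ` on the frontier of the invertible region, `ζ = B⁻(θ)` lies in the
closed unit cube `[-1,1]^q` and some coordinate has absolute value exactly `1`. -/
theorem Binv_of_frontier {q : ℕ} (hq : 1 ≤ q) (θ : Fin q → ℝ)
    (hθ : θ ∈ frontier (invRegion q)) :
    (∀ i, |Binv θ i| ≤ 1) ∧ ∃ i, |Binv θ i| = 1 :=
  Binv_of_frontier_general θ hθ
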